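/- arXiv:2505.12156 — 2 statements merged into one kernel-verified Lean document; each statement's English description precedes it below -/
import Mathlib

section
/- Let A be an ℕ-graded unital ℂ-algebra satisfying the hypotheses below, H ⊆ Q₀ a subset, and e := Σ_{i∈H} e_i. Assume the quotient of A by the two-sided ideal generated by e is finite-dimensional over ℂ. Then the corner algebra eAe := {x ∈ A : e·x·e = x} is a finitely generated non-unital ℂ-algebra (with multiplicative identity e): there exists a finite subset S ⊆ eAe such that every element of eAe lies in the smallest ℂ-linear subspace of A containing S and closed under the multiplication of A (the non-unital ℂ-subalgebra generated by S). -/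
noncomputable section

open scoped BigOperators

namespace Stmt7


variable {A : Type} [Ring A] [Algebra ℂ A] (𝒜 : ℕ → Submodule ℂ A) [GradedRing 𝒜]

/-- The degree-`d` projection, as a `ℂ`-linear map. -/
def pr (d : ℕ) : A →ₗ[ℂ] A :=
  (𝒜 d).subtype ∘ₗ (DirectSum.component ℂ ℕ (fun i => ↥(𝒜 i)) d) ∘ₗ
    (DirectSum.decomposeLinearEquiv 𝒜).toLinearMap

lemma pr_apply (d : ℕ) (x : A) : pr 𝒜 d x = (DirectSum.decompose 𝒜 x d : A) := rfl

lemma pr_of_mem_same {d : ℕ} {x : A} (hx : x ∈ 𝒜 d) : pr 𝒜 d x = x := by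
  rw [pr_apply, DirectSum.decompose_of_mem_same 𝒜 hx]

lemma pr_of_mem_ne {d k : ℕ} {x : A} (hx : x ∈ 𝒜 k) (h : k ≠ d) : pr 𝒜 d x = 0 := by
  rw [pr_apply, DirectSum.decompose_of_mem_ne 𝒜 hx h]

lemma pow_le_graded : ∀ k, 𝒜 1 ^ (k + 1) ≤ 𝒜 (k + 1) := by
  intro k
  induction k with
  | zero => rw [pow_one]
  | succ n ih =>
    rw [pow_succ]
    refine le_trans (mul_le_mul' ih le_rfl) ?_
    exact Submodule.mul_le.2 fun a ha b hb => SetLike.mul_mem_graded ha hb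

lemma graded_top (hone : (1:A) ∈ 𝒜 0)
    (hgen : Algebra.adjoin ℂ ((𝒜 0 : Set A) ∪ (𝒜 1 : Set A)) = ⊤) :
    𝒜 0 ⊔ (⨆ k : ℕ, 𝒜 1 ^ (k + 1)) = ⊤ := by
  set P : Submodule ℂ A := ⨆ k : ℕ, 𝒜 1 ^ (k + 1) with hP
  set T : Submodule ℂ A := 𝒜 0 ⊔ P with hT
  have hle : ∀ k : ℕ, 𝒜 1 ^ (k + 1) ≤ P := fun k => le_iSup (fun k : ℕ => 𝒜 1 ^ (k+1)) k
  have h01 : 𝒜 0 * 𝒜 1 ≤ 𝒜 1 := Submodule.mul_le.2 fun a ha b hb => by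
    simpa using SetLike.mul_mem_graded ha hb
  have h10 : 𝒜 1 * 𝒜 0 ≤ 𝒜 1 := Submodule.mul_le.2 fun a ha b hb => by
    simpa using SetLike.mul_mem_graded ha hb
  have h0p : ∀ k, 𝒜 0 * 𝒜 1 ^ (k+1) ≤ 𝒜 1 ^ (k+1) := by
    intro k
    have h : 𝒜 0 * 𝒜 1 ^ (k+1) = (𝒜 0 * 𝒜 1) * 𝒜 1 ^ k := by
      rw [pow_succ', ← mul_assoc]
    rw [h, pow_succ']
    exact mul_le_mul' h01 le_rfl
  have hp0 : ∀ k, 𝒜 1 ^ (k+1) * 𝒜 0 ≤ 𝒜 1 ^ (k+1) := by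
    intro k
    have h : 𝒜 1 ^ (k+1) * 𝒜 0 = 𝒜 1 ^ k * (𝒜 1 * 𝒜 0) := by
      rw [pow_succ, mul_assoc]
    rw [h, pow_succ]
    exact mul_le_mul' le_rfl h10
  have hmul : T * T ≤ T := by
    rw [hT, Submodule.sup_mul, Submodule.mul_sup, Submodule.mul_sup]
    refine sup_le (sup_le ?_ ?_) (sup_le ?_ ?_)
    · exact le_sup_of_le_left (Submodule.mul_le.2 fun a ha b hb => by
        simpa using SetLike.mul_mem_graded ha hb)
    · rw [hP, Submodule.mul_iSup]
      exact iSup_le fun k => le_sup_of_le_right (le_trans (h0p k) (hle k))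
    · rw [hP, Submodule.iSup_mul]
      exact iSup_le fun k => le_sup_of_le_right (le_trans (hp0 k) (hle k))
    · rw [hP, Submodule.iSup_mul]
      refine iSup_le fun k => ?_
      rw [Submodule.mul_iSup]
      refine iSup_le fun l => le_sup_of_le_right ?_
      have h : 𝒜 1 ^ (k+1) * 𝒜 1 ^ (l+1) = 𝒜 1 ^ (k + l + 1 + 1) := by
        rw [← pow_add]; ring_nf
      rw [h]
      exact hle (k + l + 1)
  have hTalg : Algebra.adjoin ℂ ((𝒜 0 : Set A) ∪ (𝒜 1 : Set A)) ≤
      (T.toSubalgebra (le_sup_left (a := 𝒜 0) hone)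
        (fun x y hx hy => Submodule.mul_le.1 hmul x hx y hy)) := by
    refine Algebra.adjoin_le ?_
    rintro x (hx | hx)
    · exact le_sup_left (a := 𝒜 0) hx
    · refine le_sup_right (b := P) (hle 0 ?_)
      rw [zero_add, pow_one]; exact hx
  rw [hgen] at hTalg
  exact top_le_iff.1 fun x _ => hTalg trivial

lemma graded_le_pow (htop : 𝒜 0 ⊔ (⨆ k : ℕ, 𝒜 1 ^ (k + 1)) = ⊤)
    (d : ℕ) : 𝒜 (d+1) ≤ 𝒜 1 ^ (d+1) := by
  intro x hx
  have hxT : x ∈ 𝒜 0 ⊔ (⨆ k : ℕ, 𝒜 1 ^ (k + 1)) := htop ▸ Submodule.mem_top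
  have hmem : pr 𝒜 (d+1) x ∈
      Submodule.map (pr 𝒜 (d+1)) (𝒜 0 ⊔ (⨆ k : ℕ, 𝒜 1 ^ (k + 1))) :=
    Submodule.mem_map_of_mem hxT
  rw [Submodule.map_sup, Submodule.map_iSup, pr_of_mem_same 𝒜 hx] at hmem
  refine (sup_le ?_ (iSup_le fun k => ?_) : _ ≤ 𝒜 1 ^ (d+1)) hmem
  · refine Submodule.map_le_iff_le_comap.2 fun y hy => ?_
    have h : pr 𝒜 (d+1) y = 0 := pr_of_mem_ne 𝒜 hy (by omega)
    simp [Submodule.mem_comap, h]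
  · refine Submodule.map_le_iff_le_comap.2 fun y hy => ?_
    rcases eq_or_ne k d with rfl | hk
    · have h : pr 𝒜 (k+1) y = y := pr_of_mem_same 𝒜 (pow_le_graded 𝒜 k hy)
      simpa [Submodule.mem_comap, h] using hy
    · have h : pr 𝒜 (d+1) y = 0 := pr_of_mem_ne 𝒜 (pow_le_graded 𝒜 k hy) (by omega)
      simp [Submodule.mem_comap, h]

variable (e : A)

/-- The degree-`n` part of the two-sided ideal generated by `e`. -/
def Jdeg (n : ℕ) : Submodule ℂ A :=
  Submodule.span ℂ {x | ∃ i j a b, i + j = n ∧ a ∈ 𝒜 i ∧ b ∈ 𝒜 j ∧ x = a * e * b}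

/-- The two-sided ideal generated by `e`, described by homogeneous generators. -/
def Ihom : Submodule ℂ A :=
  Submodule.span ℂ {x | ∃ i j a b, a ∈ 𝒜 i ∧ b ∈ 𝒜 j ∧ x = a * e * b}

lemma Igen_eq_Ihom :
    Submodule.span ℂ {x : A | ∃ a b : A, x = a * e * b} = Ihom 𝒜 e := by
  refine le_antisymm ?_ ?_
  · refine Submodule.span_le.2 ?_
    rintro x ⟨a, b, rfl⟩
    classical
    have ha := DirectSum.sum_support_decompose 𝒜 a
    have hb := DirectSum.sum_support_decompose 𝒜 b
    have key : a * e * b = ∑ i ∈ (DirectSum.decompose 𝒜 a).support,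
        ∑ j ∈ (DirectSum.decompose 𝒜 b).support,
          (DirectSum.decompose 𝒜 a i : A) * e * (DirectSum.decompose 𝒜 b j : A) := by
      conv_lhs => rw [← ha, ← hb]
      rw [Finset.sum_mul, Finset.sum_mul]
      refine Finset.sum_congr rfl fun i _ => ?_
      rw [Finset.mul_sum]
    rw [key]
    refine Submodule.sum_mem _ fun i _ => Submodule.sum_mem _ fun j _ => ?_
    exact Submodule.subset_span ⟨i, j, _, _, SetLike.coe_mem _, SetLike.coe_mem _, rfl⟩
  · refine Submodule.span_le.2 ?_
    rintro x ⟨i, j, a, b, _, _, rfl⟩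
    exact Submodule.subset_span ⟨a, b, rfl⟩

lemma pr_Ihom_le (he0 : e ∈ 𝒜 0) (n : ℕ) :
    Submodule.map (pr 𝒜 n) (Ihom 𝒜 e) ≤ Jdeg 𝒜 e n := by
  rw [Ihom, Submodule.map_span, Submodule.span_le]
  rintro x ⟨y, ⟨i, j, a, b, ha, hb, rfl⟩, rfl⟩
  have hmem : a * e * b ∈ 𝒜 (i + j) := by
    have h1 : a * e ∈ 𝒜 i := by simpa using SetLike.mul_mem_graded ha he0
    exact SetLike.mul_mem_graded h1 hb
  rcases eq_or_ne (i + j) n with h | h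
  · rw [pr_of_mem_same 𝒜 (h ▸ hmem)]
    exact Submodule.subset_span ⟨i, j, a, b, h, ha, hb, rfl⟩
  · rw [pr_of_mem_ne 𝒜 hmem h]
    exact Submodule.zero_mem _

lemma exists_bound (he0 : e ∈ 𝒜 0)
    (hquot : FiniteDimensional ℂ (A ⧸ Submodule.span ℂ {x : A | ∃ a b : A, x = a * e * b})) :
    ∃ N : ℕ, ∀ n, N < n → 𝒜 n ≤ Jdeg 𝒜 e n := by
  set I := Submodule.span ℂ {x : A | ∃ a b : A, x = a * e * b} with hI
  haveI : IsNoetherian ℂ (A ⧸ I) := IsNoetherian.iff_fg.2 hquot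
  set g : ℕ → Submodule ℂ A := fun n => ⨆ d ∈ Finset.range (n+1), 𝒜 d with hg
  have hgmono : Monotone g := by
    intro m n hmn
    exact biSup_mono fun d hd => Finset.mem_range.2 (lt_of_lt_of_le (Finset.mem_range.1 hd)
      (by omega))
  set f : ℕ →o Submodule ℂ (A ⧸ I) :=
    ⟨fun n => Submodule.map I.mkQ (g n), fun m n h => Submodule.map_mono (hgmono h)⟩ with hf
  obtain ⟨N, hst⟩ := monotone_stabilizes_iff_noetherian.mpr ‹_› f
  have hgtop : ⨆ n, g n = ⊤ := by
    rw [eq_top_iff, ← (DirectSum.Decomposition.isInternal 𝒜).submodule_iSup_eq_top]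
    exact iSup_le fun d => le_iSup_of_le d (le_biSup _ (Finset.self_mem_range_succ d))
  have hftop : f N = ⊤ := by
    have h1 : ⨆ n, f n = ⊤ := by
      have h2 : ⨆ n, f n = Submodule.map I.mkQ (⨆ n, g n) := (Submodule.map_iSup _ _).symm
      rw [h2, hgtop, Submodule.map_top, Submodule.range_mkQ]
    rw [← h1]
    refine le_antisymm (le_iSup f N) (iSup_le fun n => ?_)
    calc f n ≤ f (max n N) := f.monotone (le_max_left n N)
      _ = f N := (hst (max n N) (le_max_right n N)).symm
  refine ⟨N, fun n hn x hx => ?_⟩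
  have hq : I.mkQ x ∈ f N := by rw [hftop]; trivial
  obtain ⟨y, hy, hyx⟩ := hq
  have hxy : x - y ∈ I := by
    have h := (Submodule.Quotient.eq I).1 hyx
    simpa using neg_mem h
  have hpry : pr 𝒜 n y = 0 := by
    have hmem : pr 𝒜 n y ∈ Submodule.map (pr 𝒜 n) (g N) := Submodule.mem_map_of_mem hy
    have hle : Submodule.map (pr 𝒜 n) (g N) ≤ ⊥ := by
      rw [hg]
      simp only [Submodule.map_iSup]
      refine iSup_le fun d => iSup_le fun hd => ?_
      refine Submodule.map_le_iff_le_comap.2 fun z hz => ?_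
      have h : pr 𝒜 n z = 0 :=
        pr_of_mem_ne 𝒜 hz (by have := Finset.mem_range.1 hd; omega)
      simp [Submodule.mem_comap, h]
    simpa using hle hmem
  have hpr : pr 𝒜 n (x - y) = x := by
    rw [map_sub, pr_of_mem_same 𝒜 hx, hpry, sub_zero]
  have hxI : x ∈ Submodule.map (pr 𝒜 n) I := ⟨x - y, hxy, hpr⟩
  rw [hI, Igen_eq_Ihom 𝒜 e] at hxI
  exact pr_Ihom_le 𝒜 e he0 n hxI


/-- Let `A` be an `ℕ`-graded unital `ℂ`-algebra whose degree-`0` part is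
spanned by a complete set of pairwise orthogonal idempotents `(e_i)_{i ∈ Q₀}`, whose
degree-`1` part is finite-dimensional, and which is generated in degrees `0` and `1`.
Let `H ⊆ Q₀`, `e = ∑_{i ∈ H} e_i`, and assume `A` modulo the two-sided ideal generated
by `e` is finite-dimensional.  Then the corner algebra `eAe` is finitely generated as a
non-unital `ℂ`-algebra. -/
theorem stmt7 {A : Type} [Ring A] [Algebra ℂ A]
    (𝒜 : ℕ → Submodule ℂ A) [GradedRing 𝒜]
    {Q₀ : Type} [Fintype Q₀] (eI : Q₀ → A)
    (h0 : ∀ i, eI i ∈ 𝒜 0)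
    (hidem : ∀ i, eI i * eI i = eI i)
    (horth : ∀ i j, i ≠ j → eI i * eI j = 0)
    (hsum : ∑ i : Q₀, eI i = 1)
    (hA0 : 𝒜 0 = Submodule.span ℂ (Set.range eI))
    (hfin1 : FiniteDimensional ℂ (𝒜 1))
    (hgen : Algebra.adjoin ℂ ((𝒜 0 : Set A) ∪ (𝒜 1 : Set A)) = ⊤)
    (H : Finset Q₀) (e : A) (he : e = ∑ i ∈ H, eI i)
    (hquot : FiniteDimensional ℂ
      (A ⧸ Submodule.span ℂ {x : A | ∃ a b : A, x = a * e * b})) :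
    ∃ S : Finset A, (↑S : Set A) ⊆ {x : A | e * x * e = x} ∧
      ∀ x : A, e * x * e = x → x ∈ NonUnitalAlgebra.adjoin ℂ (S : Set A) := by
  classical
  -- basic facts about `e`
  have he0 : e ∈ 𝒜 0 := he ▸ Submodule.sum_mem _ fun i _ => h0 i
  have hone : (1 : A) ∈ 𝒜 0 := hsum ▸ Submodule.sum_mem _ fun i _ => h0 i
  have he2 : e * e = e := by
    rw [he, Finset.sum_mul_sum]
    refine Finset.sum_congr rfl fun i hi => ?_
    refine Finset.sum_eq_single i (fun j _ hj => horth i j (Ne.symm hj)) (fun h => (h hi).elim)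
      |>.trans (hidem i)
  have he2' : ∀ x : A, e * (e * x) = e * x := fun x => by rw [← mul_assoc, he2]
  -- the corner projection
  set φ : A →ₗ[ℂ] A := (LinearMap.mulLeft ℂ e).comp (LinearMap.mulRight ℂ e) with hφ
  have φ_apply : ∀ x : A, φ x = e * x * e := fun x => (mul_assoc e x e).symm
  -- grading facts
  have htop := graded_top 𝒜 hone hgen
  have hQpow : ∀ d : ℕ, 𝒜 (d + 1) ≤ 𝒜 1 ^ (d + 1) := graded_le_pow 𝒜 htop
  obtain ⟨N, hbound⟩ := exists_bound 𝒜 e he0 hquot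
  -- finite generation of graded pieces
  have fg1 : (𝒜 1).FG := (Submodule.fg_iff_finiteDimensional _).2 hfin1
  have hfg : ∀ d : ℕ, (𝒜 d).FG := by
    intro d
    match d with
    | 0 => exact hA0 ▸ Submodule.fg_span (Set.finite_range eI)
    | (d+1) =>
      haveI : FiniteDimensional ℂ ↥(𝒜 1 ^ (d+1)) :=
        (Submodule.fg_iff_finiteDimensional _).1 (fg1.pow _)
      haveI : FiniteDimensional ℂ (𝒜 (d+1)) :=
        Submodule.finiteDimensional_of_le (hQpow d)
      exact (Submodule.fg_iff_finiteDimensional _).2 this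
  -- the finite-dimensional space of low-degree corner elements
  set U : Submodule ℂ A := ⨆ d ∈ Finset.range (N + 3), Submodule.map φ (𝒜 d) with hU
  have hUfg : U.FG := Submodule.fg_biSup _ _ fun d _ => (hfg d).map φ
  obtain ⟨S, hS⟩ := hUfg
  -- every element of U is a fixed point of the corner projection
  have hUfix : ∀ u ∈ U, e * u * e = u := by
    intro u hu
    have hker : U ≤ LinearMap.ker (φ - LinearMap.id) := by
      rw [hU]
      refine iSup_le fun d => iSup_le fun _ => Submodule.map_le_iff_le_comap.2 fun z _ => ?_
      have : φ (φ z) = φ z := by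
        simp only [φ_apply]
        simp only [mul_assoc, he2']
        rw [he2]
      simp [Submodule.mem_comap, LinearMap.mem_ker, LinearMap.sub_apply, this]
    have := hker hu
    rw [LinearMap.mem_ker, LinearMap.sub_apply, sub_eq_zero, LinearMap.id_apply, φ_apply] at this
    exact this
  refine ⟨S, ?_, ?_⟩
  · intro s hs
    exact hUfix s (hS ▸ Submodule.subset_span hs)
  -- the adjoin, as a submodule
  set M : Submodule ℂ A :=
    NonUnitalSubalgebra.toSubmodule (NonUnitalAlgebra.adjoin ℂ (S : Set A)) with hM
  have hSM : Submodule.span ℂ (S : Set A) ≤ M :=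
    Submodule.span_le.2 (NonUnitalAlgebra.subset_adjoin ℂ)
  have hMmul : ∀ x y : A, x ∈ M → y ∈ M → x * y ∈ M := by
    intro x y hx hy
    rw [hM, NonUnitalSubalgebra.mem_toSubmodule] at *
    exact mul_mem hx hy
  -- key induction
  have key : ∀ d : ℕ, ∀ x ∈ 𝒜 d, φ x ∈ M := by
    intro d
    induction d using Nat.strong_induction_on with
    | _ d IH =>
      intro x hx
      by_cases hd : d < N + 3
      · have h1 : φ x ∈ Submodule.map φ (𝒜 d) := Submodule.mem_map_of_mem hx
        have h2 : Submodule.map φ (𝒜 d) ≤ U := by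
          rw [hU]
          exact le_iSup₂ (f := fun d (_ : d ∈ Finset.range (N+3)) => Submodule.map φ (𝒜 d)) d
            (Finset.mem_range.2 hd)
        exact hSM (hS ▸ h2 h1)
      · -- large degree: factor through the ideal
        push_neg at hd
        have hxpow : x ∈ 𝒜 1 * (𝒜 1 ^ (N + 1) * 𝒜 1 ^ (d - N - 2)) := by
          have h1 : x ∈ 𝒜 1 ^ d := by
            have hd1 : d = (d - 1) + 1 := by omega
            exact hd1 ▸ hQpow (d - 1) (hd1 ▸ hx)
          have h2 : 𝒜 1 ^ d = 𝒜 1 * (𝒜 1 ^ (N + 1) * 𝒜 1 ^ (d - N - 2)) := by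
            rw [← pow_add, ← pow_succ']
            congr 1
            omega
          rwa [h2] at h1
        have hmono : 𝒜 1 * (𝒜 1 ^ (N + 1) * 𝒜 1 ^ (d - N - 2)) ≤
            𝒜 1 * (Jdeg 𝒜 e (N + 1) * 𝒜 1 ^ (d - N - 2)) :=
          mul_le_mul' le_rfl (mul_le_mul'
            (le_trans (pow_le_graded 𝒜 N) (hbound (N+1) (by omega))) le_rfl)
        have hx2 := hmono hxpow
        -- now peel off the three layers
        clear hxpow hx
        refine Submodule.mul_induction_on hx2 ?_ (fun a b ha hb => by
          rw [map_add]; exact add_mem ha hb)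
        intro u hu w hw
        refine Submodule.mul_induction_on hw ?_ ?_
        · intro v hv c hc
          -- v ∈ Jdeg: span induction
          have hvspan : v ∈ Submodule.span ℂ
              {x | ∃ i j a b, i + j = N + 1 ∧ a ∈ 𝒜 i ∧ b ∈ 𝒜 j ∧x = a * e * b} := hv
          clear hv
          induction hvspan using Submodule.span_induction with
          | mem v hvmem =>
            obtain ⟨i, j, a, b, hij, ha, hb, rfl⟩ := hvmem
            -- the main computation
            have hc' : c ∈ 𝒜 (d - N - 2) := by
              have hd2 : d - N - 2 = (d - N - 3) + 1 := by omega
              exact hd2 ▸ pow_le_graded 𝒜 (d - N - 3) (hd2 ▸ hc)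
            have hua : u * a ∈ 𝒜 (1 + i) := SetLike.mul_mem_graded hu ha
            have hbc : b * c ∈ 𝒜 (j + (d - N - 2)) := SetLike.mul_mem_graded hb hc'
            have hkey : φ (u * (a * e * b * c)) = φ (u * a) * φ (b * c) := by
              simp only [φ_apply]
              simp only [mul_assoc, he2']
            rw [hkey]
            exact hMmul _ _ (IH (1 + i) (by omega) _ hua) (IH (j + (d - N - 2)) (by omega) _ hbc)
          | zero => simp only [mul_zero, zero_mul, map_zero]; exact zero_mem M
          | add v₁ v₂ _ _ h1 h2 =>
            have : u * ((v₁ + v₂) * c) = u * (v₁ * c) + u * (v₂ * c) := by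
              rw [add_mul, mul_add]
            rw [this, map_add]; exact add_mem h1 h2
          | smul t v _ h1 =>
            have hsm : u * ((t • v) * c) = t • (u * (v * c)) := by
              rw [smul_mul_assoc, mul_smul_comm]
            rw [hsm, map_smul]; exact Submodule.smul_mem M t h1
        · intro w₁ w₂ h1 h2
          have : u * (w₁ + w₂) = u * w₁ + u * w₂ := mul_add u w₁ w₂
          rw [this, map_add]; exact add_mem h1 h2
  -- conclude
  intro x hxfix
  rw [← NonUnitalSubalgebra.mem_toSubmodule, ← hM]
  have hdec := DirectSum.sum_support_decompose 𝒜 x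
  have : x = φ x := by rw [φ_apply, hxfix]
  rw [this, ← hdec, map_sum]
  exact Submodule.sum_mem _ fun n _ => key n _ (SetLike.coe_mem _)

end Stmt7
end
end

section
/- Let A be an ℕ-graded unital ℂ-algebra satisfying the hypotheses below, H ⊆ Q₀ a subset, and e := Σ_{i∈H} e_i. Assume the quotient of A by the two-sided ideal generated by e is finite-dimensional over ℂ. Then Ae := {x ∈ A : x·e = x} is finitely generated as a right module over the corner algebra eAe := {x ∈ A : e·x·e = x}: there exists a finite subset T ⊆ Ae such that every element of Ae lies in the ℂ-linear span of T ∪ {t·c : t ∈ T, c ∈ eAe}. Symmetrically, eA := {x ∈ A : e·x = x} is finitely generated as a left eAe-module: there exists a finite subset T' ⊆ eA such that every element of eA lies in the ℂ-linear span of T' ∪ {c·t : t ∈ T', c ∈ eAe}. -/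
/-!
The span `I` of all `a e b` is also spanned by the products `a e b` with `a`, `b` homogeneous,
so it is a homogeneous subspace; as `A ⧸ I` is finite-dimensional, `A_n ⊆ I` for all `n ≥ N`.
Generation in degrees `0` and `1` gives `A_n = A_0 A_1^n`, hence every `A_n` is
finite-dimensional and `A_{n+1} = A_n A_1`. For `n ≥ N` an element `u v e` with `u ∈ A_n`,
`v ∈ A_1` is a sum of terms `a e b v e = (a e) (e b v e)` with `a` homogeneous of degree `≤ n`,
so by induction on the degree `Ae` is generated over `eAe` by the finite-dimensional space
`A_{≤ N} e`. The left module `eA` is symmetric, using `A_{n+1} = A_1 A_n` and `b` instead of `a`.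
-/

open Submodule

section Graded

variable {R A : Type*} [CommSemiring R] [Semiring A] [Algebra R A]
  (𝒜 : ℕ → Submodule R A) [GradedAlgebra 𝒜]

namespace GradedAlgebra

theorem mul_le_add (i j : ℕ) : 𝒜 i * 𝒜 j ≤ 𝒜 (i + j) :=
  Submodule.mul_le.2 fun _ ha _ hb => SetLike.mul_mem_graded ha hb

theorem degree_one_pow_le (n : ℕ) : 𝒜 1 ^ n ≤ 𝒜 n := by
  induction n with
  | zero => simpa [Submodule.one_le] using SetLike.one_mem_graded 𝒜
  | succ n ih => rw [pow_succ]; exact (mul_le_mul' ih le_rfl).trans (mul_le_add 𝒜 n 1)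

theorem proj_mem_of_mem {K : ℕ → Submodule R A} {m : ℕ} {x : A} (hxm : x ∈ 𝒜 m)
    (hxK : x ∈ K m) (n : ℕ) : proj 𝒜 n x ∈ K n := by
  rcases eq_or_ne m n with rfl | h
  · rwa [proj_apply, DirectSum.decompose_of_mem_same 𝒜 hxm]
  · rw [proj_apply, DirectSum.decompose_of_mem_ne 𝒜 hxm h]
    exact zero_mem _

theorem eq_mul_pow_of_adjoin_eq_top (hgen : Algebra.adjoin R ((𝒜 0 : Set A) ∪ 𝒜 1) = ⊤)
    (n : ℕ) : 𝒜 n = 𝒜 0 * 𝒜 1 ^ n := by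
  have hclosure : ∀ w ∈ Submonoid.closure ((𝒜 0 : Set A) ∪ 𝒜 1), ∃ m, w ∈ 𝒜 0 * 𝒜 1 ^ m := by
    intro w hw
    induction hw using Submonoid.closure_induction_left with
    | one => exact ⟨0, by simpa using SetLike.one_mem_graded 𝒜⟩
    | mul_left s hs w _ ih =>
      obtain ⟨m, hm⟩ := ih
      rcases hs with hs | hs
      · have hsw := Submodule.mul_mem_mul hs hm
        rw [← mul_assoc] at hsw
        exact ⟨m, mul_le_mul' (mul_le_add 𝒜 0 0) le_rfl hsw⟩
      · have hsw := Submodule.mul_mem_mul hs hm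
        rw [← mul_assoc] at hsw
        refine ⟨m + 1, ?_⟩
        simpa [pow_succ'] using Submodule.mul_mem_mul (SetLike.one_mem_graded 𝒜)
          (mul_le_mul' (mul_le_add 𝒜 1 0) le_rfl hsw)
  refine le_antisymm (fun x hx => ?_)
    ((mul_le_mul' le_rfl (degree_one_pow_le 𝒜 n)).trans (by simpa using mul_le_add 𝒜 0 n))
  have hxspan : x ∈ span R (Submonoid.closure ((𝒜 0 : Set A) ∪ 𝒜 1) : Set A) := by
    rw [← Algebra.adjoin_eq_span, hgen]
    trivial
  rw [← DirectSum.decompose_of_mem_same 𝒜 hx, ← proj_apply]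
  clear hx
  induction hxspan using span_induction with
  | mem w hw =>
    obtain ⟨m, hm⟩ := hclosure w hw
    have hwm : w ∈ 𝒜 m := by
      simpa using ((mul_le_mul' le_rfl (degree_one_pow_le 𝒜 m)).trans (mul_le_add 𝒜 0 m)) hm
    exact proj_mem_of_mem 𝒜 (K := fun k => 𝒜 0 * 𝒜 1 ^ k) hwm hm n
  | zero => simp
  | add y z _ _ hy hz => rw [map_add]; exact add_mem hy hz
  | smul r y _ hy => rw [map_smul]; exact smul_mem _ r hy

theorem succ_le_mul_one_of_adjoin_eq_top
    (hgen : Algebra.adjoin R ((𝒜 0 : Set A) ∪ 𝒜 1) = ⊤) (n : ℕ) : 𝒜 (n + 1) ≤ 𝒜 n * 𝒜 1 := by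
  rw [eq_mul_pow_of_adjoin_eq_top 𝒜 hgen (n + 1), pow_succ, ← mul_assoc,
    ← eq_mul_pow_of_adjoin_eq_top 𝒜 hgen n]

theorem succ_le_one_mul_of_adjoin_eq_top
    (hgen : Algebra.adjoin R ((𝒜 0 : Set A) ∪ 𝒜 1) = ⊤) (n : ℕ) : 𝒜 (n + 1) ≤ 𝒜 1 * 𝒜 n := by
  rw [eq_mul_pow_of_adjoin_eq_top 𝒜 hgen (n + 1), pow_succ', ← mul_assoc]
  exact mul_le_mul' (by simpa using mul_le_add 𝒜 0 1) (degree_one_pow_le 𝒜 n)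

theorem fg_of_adjoin_eq_top (hgen : Algebra.adjoin R ((𝒜 0 : Set A) ∪ 𝒜 1) = ⊤)
    (h0 : (𝒜 0).FG) (h1 : (𝒜 1).FG) (n : ℕ) : (𝒜 n).FG := by
  rw [eq_mul_pow_of_adjoin_eq_top 𝒜 hgen n]
  exact h0.mul (h1.pow n)

variable {𝒜} {e : A}

theorem proj_mem_span_homogeneous_sandwich (he : e ∈ 𝒜 0) (n : ℕ) {z : A}
    (hz : z ∈ span R {x | ∃ a b, x = a * e * b}) :
    proj 𝒜 n z ∈ span R {x | ∃ p q, p + q = n ∧ ∃ a ∈ 𝒜 p, ∃ b ∈ 𝒜 q, x = a * e * b} := by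
  induction hz using span_induction with
  | mem z hz =>
    obtain ⟨a, b, rfl⟩ := hz
    induction a using DirectSum.Decomposition.inductionOn 𝒜 with
    | zero => simp
    | @homogeneous p a =>
      induction b using DirectSum.Decomposition.inductionOn 𝒜 with
      | zero => simp
      | @homogeneous q b =>
        have hab : (a : A) * e * b ∈ 𝒜 (p + q) := by
          simpa using SetLike.mul_mem_graded (SetLike.mul_mem_graded a.2 he) b.2
        exact proj_mem_of_mem 𝒜
          (K := fun n => span R {x | ∃ p q, p + q = n ∧ ∃ a ∈ 𝒜 p, ∃ b ∈ 𝒜 q, x = a * e * b})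
          hab (subset_span ⟨p, q, rfl, a, a.2, b, b.2, rfl⟩) n
      | add b b' hb hb' => rw [mul_add, map_add]; exact add_mem hb hb'
    | add a a' ha ha' => rw [add_mul, add_mul, map_add]; exact add_mem ha ha'
  | zero => simp
  | add y z _ _ hy hz => rw [map_add]; exact add_mem hy hz
  | smul r y _ hy => rw [map_smul]; exact smul_mem _ r hy

theorem isHomogeneous_span_sandwich (he : e ∈ 𝒜 0) :
    DirectSum.SetLike.IsHomogeneous 𝒜 (span R {x : A | ∃ a b, x = a * e * b}) := fun n _ hz =>
  span_le.2 (by rintro _ ⟨p, q, -, a, -, b, -, rfl⟩; exact subset_span ⟨a, b, rfl⟩)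
    (proj_mem_span_homogeneous_sandwich he n hz)

theorem mem_span_homogeneous_sandwich (he : e ∈ 𝒜 0) {n : ℕ} {u : A} (hu : u ∈ 𝒜 n)
    (huI : u ∈ span R {x | ∃ a b, x = a * e * b}) :
    u ∈ span R {x | ∃ p q, p + q = n ∧ ∃ a ∈ 𝒜 p, ∃ b ∈ 𝒜 q, x = a * e * b} := by
  simpa [DirectSum.decompose_of_mem_same 𝒜 hu] using proj_mem_span_homogeneous_sandwich he n huI

end GradedAlgebra

end Graded

theorem eventually_le_of_isHomogeneous {R M : Type*} [Ring R] [AddCommGroup M] [Module R M]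
    {ℳ : ℕ → Submodule R M} [DirectSum.Decomposition ℳ] {I : Submodule R M}
    (hI : DirectSum.SetLike.IsHomogeneous ℳ I) [IsNoetherian R (M ⧸ I)] :
    ∀ᶠ n in Filter.atTop, ℳ n ≤ I := by
  let f : ℕ →o Submodule R (M ⧸ I) :=
    ⟨fun n => (⨆ (k) (_ : k ≤ n), ℳ k).map I.mkQ,
      fun _ _ h => map_mono (biSup_mono fun _ hk => hk.trans h)⟩
  obtain ⟨N, hN⟩ := monotone_stabilizes_iff_noetherian.2 ‹_› f
  refine Filter.eventually_atTop.2 ⟨N + 1, fun n hn x hx => ?_⟩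
  have hxW : x ∈ (⨆ (k) (_ : k ≤ N), ℳ k) ⊔ I := by
    rw [← ker_mkQ I, ← comap_map_eq]
    change I.mkQ x ∈ f N
    rw [hN n (by omega)]
    exact mem_map_of_mem (mem_iSup_of_mem n (mem_iSup_of_mem le_rfl hx))
  let π : M →ₗ[R] M := (ℳ n).subtype ∘ₗ DFinsupp.lapply n ∘ₗ
    (DirectSum.decomposeLinearEquiv ℳ).toLinearMap
  have hπ_apply : ∀ y, π y = DirectSum.decompose ℳ y n := fun _ => rfl
  have hπ : (⨆ (k) (_ : k ≤ N), ℳ k) ⊔ I ≤ I.comap π :=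
    sup_le (iSup₂_le fun k hk y hy => by
      simp [hπ_apply, DirectSum.decompose_of_mem_ne ℳ hy (show k ≠ n by omega)])
      fun _ hy => hI n hy
  simpa [hπ_apply, DirectSum.decompose_of_mem_same ℳ hx] using hπ hxW

section Corner

variable {R A : Type*} [CommSemiring R] [Semiring A] [Algebra R A] {e : A}

theorem IsIdempotentElem.mul_mem_corner (he : IsIdempotentElem e) {c c' : A} (hc : e * c * e = c)
    (hc' : e * c' * e = c') : e * (c * c') * e = c * c' := by
  rw [← hc, ← hc']
  simp only [mul_assoc, he.mul_self_mul, he.eq]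

theorem IsIdempotentElem.mul_mul_mem_corner (he : IsIdempotentElem e) (x : A) :
    e * (e * x * e) * e = e * x * e := by
  simp only [mul_assoc, he.mul_self_mul, he.eq]

theorem IsIdempotentElem.mul_mem_span_mul_corner (he : IsIdempotentElem e) {T : Set A} {m c : A}
    (hm : m ∈ span R {y | ∃ t ∈ T, ∃ c, e * c * e = c ∧ y = t * c}) (hc : e * c * e = c) :
    m * c ∈ span R {y | ∃ t ∈ T, ∃ c, e * c * e = c ∧ y = t * c} := by
  induction hm using span_induction with
  | mem y hy =>
    obtain ⟨t, ht, c', hc', rfl⟩ := hy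
    exact subset_span ⟨t, ht, c' * c, he.mul_mem_corner hc' hc, mul_assoc t c' c⟩
  | zero => simp
  | add y z _ _ hy hz => rw [add_mul]; exact add_mem hy hz
  | smul r y _ hy => rw [smul_mul_assoc]; exact smul_mem _ r hy

theorem IsIdempotentElem.mul_mem_span_corner_mul (he : IsIdempotentElem e) {T : Set A} {m c : A}
    (hm : m ∈ span R {y | ∃ t ∈ T, ∃ c, e * c * e = c ∧ y = c * t}) (hc : e * c * e = c) :
    c * m ∈ span R {y | ∃ t ∈ T, ∃ c, e * c * e = c ∧ y = c * t} := by
  induction hm using span_induction with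
  | mem y hy =>
    obtain ⟨t, ht, c', hc', rfl⟩ := hy
    exact subset_span ⟨t, ht, c * c', he.mul_mem_corner hc hc', (mul_assoc c c' t).symm⟩
  | zero => simp
  | add y z _ _ hy hz => rw [mul_add]; exact add_mem hy hz
  | smul r y _ hy => rw [mul_smul_comm]; exact smul_mem _ r hy

variable {𝒜 : ℕ → Submodule R A} [GradedAlgebra 𝒜]

theorem exists_finset_span_mul_corner (he0 : e ∈ 𝒜 0) (he : IsIdempotentElem e)
    (hfg : ∀ n, (𝒜 n).FG) (hstep : ∀ n, 𝒜 (n + 1) ≤ 𝒜 n * 𝒜 1) {N : ℕ}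
    (hN : ∀ n ≥ N, 𝒜 n ≤ span R {x | ∃ a b, x = a * e * b}) :
    ∃ T : Finset A, (∀ t ∈ T, t * e = t) ∧
      ∀ x : A, x * e ∈ span R {y | ∃ t ∈ T, ∃ c, e * c * e = c ∧ y = t * c} := by
  classical
  obtain ⟨S, hS⟩ := fg_biSup (Finset.range (N + 1)) 𝒜 fun n _ => hfg n
  set M := span R {y | ∃ t ∈ S.image (· * e), ∃ c, e * c * e = c ∧ y = t * c}
  have hdeg : ∀ d, 𝒜 d ≤ M.comap (LinearMap.mulRight R e) := by
    intro d
    induction d using Nat.strong_induction_on with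
    | _ d ih =>
    rcases le_or_gt d N with hd | hd
    · refine (hS ▸ le_iSup₂ (f := fun k _ => 𝒜 k) d (Finset.mem_range.2 (by omega))).trans ?_
      refine span_le.2 fun s hs => subset_span ⟨s * e, Finset.mem_image_of_mem _ hs, e, ?_, ?_⟩
      · rw [he.eq, he.eq]
      · exact (he.mul_mul_self s).symm
    · obtain ⟨n, rfl⟩ : ∃ n, d = n + 1 := ⟨d - 1, by omega⟩
      refine (hstep n).trans (mul_le.2 fun u hu v _ => ?_)
      have hu' := GradedAlgebra.mem_span_homogeneous_sandwich he0 hu (hN n (by omega) hu)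
      suffices u ∈ M.comap (LinearMap.mulRight R (v * e)) by simpa [mul_assoc] using this
      refine span_le.2 ?_ hu'
      rintro _ ⟨p, q, hpq, a, ha, b, -, rfl⟩
      have hsplit : a * e * b * (v * e) = a * e * (e * (b * v) * e) := by
        simp only [mul_assoc, he.mul_self_mul]
      rw [SetLike.mem_coe, mem_comap, LinearMap.mulRight_apply, hsplit]
      exact he.mul_mem_span_mul_corner (ih p (by omega) ha) (he.mul_mul_mem_corner (b * v))
  refine ⟨S.image (· * e), by simp [he.mul_mul_self], fun x => ?_⟩
  induction x using DirectSum.Decomposition.inductionOn 𝒜 with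
  | zero => simp
  | homogeneous x => exact hdeg _ x.2
  | add x y hx hy => rw [add_mul]; exact add_mem hx hy

theorem exists_finset_span_corner_mul (he0 : e ∈ 𝒜 0) (he : IsIdempotentElem e)
    (hfg : ∀ n, (𝒜 n).FG) (hstep : ∀ n, 𝒜 (n + 1) ≤ 𝒜 1 * 𝒜 n) {N : ℕ}
    (hN : ∀ n ≥ N, 𝒜 n ≤ span R {x | ∃ a b, x = a * e * b}) :
    ∃ T : Finset A, (∀ t ∈ T, e * t = t) ∧
      ∀ x : A, e * x ∈ span R {y | ∃ t ∈ T, ∃ c, e * c * e = c ∧ y = c * t} := by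
  classical
  obtain ⟨S, hS⟩ := fg_biSup (Finset.range (N + 1)) 𝒜 fun n _ => hfg n
  set M := span R {y | ∃ t ∈ S.image (e * ·), ∃ c, e * c * e = c ∧ y = c * t}
  have hdeg : ∀ d, 𝒜 d ≤ M.comap (LinearMap.mulLeft R e) := by
    intro d
    induction d using Nat.strong_induction_on with
    | _ d ih =>
    rcases le_or_gt d N with hd | hd
    · refine (hS ▸ le_iSup₂ (f := fun k _ => 𝒜 k) d (Finset.mem_range.2 (by omega))).trans ?_
      refine span_le.2 fun s hs => subset_span ⟨e * s, Finset.mem_image_of_mem _ hs, e, ?_, ?_⟩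
      · rw [he.eq, he.eq]
      · exact (he.mul_self_mul s).symm
    · obtain ⟨n, rfl⟩ : ∃ n, d = n + 1 := ⟨d - 1, by omega⟩
      refine (hstep n).trans (mul_le.2 fun v _ u hu => ?_)
      have hu' := GradedAlgebra.mem_span_homogeneous_sandwich he0 hu (hN n (by omega) hu)
      suffices u ∈ M.comap (LinearMap.mulLeft R (e * v)) by simpa [mul_assoc] using this
      refine span_le.2 ?_ hu'
      rintro _ ⟨p, q, hpq, a, -, b, hb, rfl⟩
      have hsplit : e * v * (a * e * b) = e * (v * a) * e * (e * b) := by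
        simp only [mul_assoc, he.mul_self_mul]
      rw [SetLike.mem_coe, mem_comap, LinearMap.mulLeft_apply, hsplit]
      exact he.mul_mem_span_corner_mul (ih q (by omega) hb) (he.mul_mul_mem_corner (v * a))
  refine ⟨S.image (e * ·), by simp [he.mul_self_mul], fun x => ?_⟩
  induction x using DirectSum.Decomposition.inductionOn 𝒜 with
  | zero => simp
  | homogeneous x => exact hdeg _ x.2
  | add x y hx hy => rw [mul_add]; exact add_mem hx hy

end Corner

namespace Stmt8

theorem stmt8_general {A : Type} [Ring A] [Algebra ℂ A]
    (𝒜 : ℕ → Submodule ℂ A) [GradedRing 𝒜]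
    {Q₀ : Type} [Fintype Q₀] (eI : Q₀ → A)
    (h0 : ∀ i, eI i ∈ 𝒜 0)
    (hidem : ∀ i, eI i * eI i = eI i)
    (horth : ∀ i j, i ≠ j → eI i * eI j = 0)
    (hA0 : 𝒜 0 = Submodule.span ℂ (Set.range eI))
    (hfin1 : FiniteDimensional ℂ (𝒜 1))
    (hgen : Algebra.adjoin ℂ ((𝒜 0 : Set A) ∪ (𝒜 1 : Set A)) = ⊤)
    (H : Finset Q₀) (e : A) (he : e = ∑ i ∈ H, eI i)
    (hquot : FiniteDimensional ℂ
      (A ⧸ Submodule.span ℂ {x : A | ∃ a b : A, x = a * e * b})) :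
    (∃ T : Finset A, (↑T : Set A) ⊆ {x : A | x * e = x} ∧
      ∀ x : A, x * e = x →
        x ∈ Submodule.span ℂ
          ((T : Set A) ∪ {y : A | ∃ t ∈ T, ∃ c : A, e * c * e = c ∧ y = t * c})) ∧
    (∃ T' : Finset A, (↑T' : Set A) ⊆ {x : A | e * x = x} ∧
      ∀ x : A, e * x = x →
        x ∈ Submodule.span ℂ
          ((T' : Set A) ∪ {y : A | ∃ t ∈ T', ∃ c : A, e * c * e = c ∧ y = c * t})) := by
  have he_idem : IsIdempotentElem e :=
    he ▸ (⟨hidem, fun i j hij => horth i j hij⟩ : OrthogonalIdempotents eI).isIdempotentElem_sum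
  have he0 : e ∈ 𝒜 0 := he ▸ sum_mem fun i _ => h0 i
  have hfg := GradedAlgebra.fg_of_adjoin_eq_top 𝒜 hgen (hA0 ▸ fg_span (Set.finite_range eI))
    ((fg_iff_finiteDimensional _).2 hfin1)
  obtain ⟨N, hN⟩ := Filter.eventually_atTop.1
    (eventually_le_of_isHomogeneous (GradedAlgebra.isHomogeneous_span_sandwich he0))
  obtain ⟨T, hTe, hT⟩ := exists_finset_span_mul_corner he0 he_idem hfg
    (GradedAlgebra.succ_le_mul_one_of_adjoin_eq_top 𝒜 hgen) hN
  obtain ⟨T', hT'e, hT'⟩ := exists_finset_span_corner_mul he0 he_idem hfg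
    (GradedAlgebra.succ_le_one_mul_of_adjoin_eq_top 𝒜 hgen) hN
  refine ⟨⟨T, hTe, fun x hx => ?_⟩, ⟨T', hT'e, fun x hx => ?_⟩⟩
  · rw [← hx]
    exact span_mono Set.subset_union_right (hT x)
  · rw [← hx]
    exact span_mono Set.subset_union_right (hT' x)

/-- Under the same hypotheses as Statement 7, `Ae` is finitely generated
as a right module over the corner algebra `eAe`, and symmetrically `eA` is finitely
generated as a left `eAe`-module. -/
theorem stmt8 {A : Type} [Ring A] [Algebra ℂ A]
    (𝒜 : ℕ → Submodule ℂ A) [GradedRing 𝒜]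
    {Q₀ : Type} [Fintype Q₀] (eI : Q₀ → A)
    (h0 : ∀ i, eI i ∈ 𝒜 0)
    (hidem : ∀ i, eI i * eI i = eI i)
    (horth : ∀ i j, i ≠ j → eI i * eI j = 0)
    (hsum : ∑ i : Q₀, eI i = 1)
    (hA0 : 𝒜 0 = Submodule.span ℂ (Set.range eI))
    (hfin1 : FiniteDimensional ℂ (𝒜 1))
    (hgen : Algebra.adjoin ℂ ((𝒜 0 : Set A) ∪ (𝒜 1 : Set A)) = ⊤)
    (H : Finset Q₀) (e : A) (he : e = ∑ i ∈ H, eI i)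
    (hquot : FiniteDimensional ℂ
      (A ⧸ Submodule.span ℂ {x : A | ∃ a b : A, x = a * e * b})) :
    (∃ T : Finset A, (↑T : Set A) ⊆ {x : A | x * e = x} ∧
      ∀ x : A, x * e = x →
        x ∈ Submodule.span ℂ
          ((T : Set A) ∪ {y : A | ∃ t ∈ T, ∃ c : A, e * c * e = c ∧ y = t * c})) ∧
    (∃ T' : Finset A, (↑T' : Set A) ⊆ {x : A | e * x = x} ∧
      ∀ x : A, e * x = x →
        x ∈ Submodule.span ℂ
          ((T' : Set A) ∪ {y : A | ∃ t ∈ T', ∃ c : A, e * c * e = c ∧ y = c * t})) :=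
  stmt8_general 𝒜 eI h0 hidem horth hA0 hfin1 hgen H e he hquot

end Stmt8
end
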